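/- (Chain trace inequality.) Let k ≥ 2 and let A_1,…,A_k be positive semidefinite d×d real matrices. Then Tr(A_1 A_2 ⋯ A_k) ≤ ‖A_k^{1/2} A_1^{1/2}‖_F · Π_{i=1}^{k−1} ‖A_i^{1/2} A_{i+1}^{1/2}‖_F, i.e. the trace of the cyclic product is bounded by the product over the cycle of the Frobenius norms of products of consecutive PSD square roots. -/

import Mathlib

open Matrix Filter Finset Set
open scoped BigOperators

noncomputable section

/-- Frobenius norm of a real square matrix. -/
def frob {n : Type*} [Fintype n] (M : Matrix n n ℝ) : ℝ :=
  Real.sqrt (∑ i, ∑ j, (M i j) ^ 2)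

open Classical in
/-- The positive semidefinite square root of a matrix (junk value `0` on non-PSD input). -/
def psdSqrt {n : Type*} [Fintype n] [DecidableEq n] (A : Matrix n n ℝ) : Matrix n n ℝ :=
  if h : A.PosSemidef then
    (h.1.eigenvectorUnitary : Matrix n n ℝ) * diagonal (Real.sqrt ∘ h.1.eigenvalues) *
      (star h.1.eigenvectorUnitary : Matrix n n ℝ)
  else 0

open Classical in
/-- The largest eigenvalue of a symmetric real matrix (junk value `0` otherwise). -/
def lamMax {n : Type*} [Fintype n] [DecidableEq n] (A : Matrix n n ℝ) : ℝ :=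
  if h : A.IsHermitian then ⨆ i, h.eigenvalues i else 0

/-- Probability of observing the Bernoulli(B/n) selection pattern `x`. -/
def selProb (n B : ℕ) (x : Fin n → Bool) : ℝ :=
  ∏ i, if x i then (B : ℝ) / n else 1 - (B : ℝ) / n

/-- Average Hessian of a family. -/
def Hbar {d n : ℕ} (H : Fin n → Matrix (Fin d) (Fin d) ℝ) : Matrix (Fin d) (Fin d) ℝ :=
  (n : ℝ)⁻¹ • ∑ i, H i

/-- Mean update operator `J = I − η(1−α)H_R + ηα H_F`. -/
def Jbar {d nr nf : ℕ} (η α : ℝ) (HR : Fin nr → Matrix (Fin d) (Fin d) ℝ)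
    (HF : Fin nf → Matrix (Fin d) (Fin d) ℝ) : Matrix (Fin d) (Fin d) ℝ :=
  1 - (η * (1 - α)) • Hbar HR + (η * α) • Hbar HF

/-- Random update operator for the batch-selection pattern `x`. -/
def Jop {d nr nf : ℕ} (η α : ℝ) (B : ℕ) (HR : Fin nr → Matrix (Fin d) (Fin d) ℝ)
    (HF : Fin nf → Matrix (Fin d) (Fin d) ℝ)
    (x : (Fin nr → Bool) × (Fin nf → Bool)) : Matrix (Fin d) (Fin d) ℝ :=
  1 - (η * (1 - α) / B) • (∑ r, if x.1 r then HR r else 0)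
    + (η * α / B) • (∑ f, if x.2 f then HF f else 0)

/-- `C_r = η²(1−α)²(1/n_r)(1/B − 1/n_r)`. -/
def Crc (η α : ℝ) (B nr : ℕ) : ℝ :=
  η ^ 2 * (1 - α) ^ 2 * (nr : ℝ)⁻¹ * ((B : ℝ)⁻¹ - (nr : ℝ)⁻¹)

/-- `C_f = η²α²(1/n_f)(1/B − 1/n_f)`. -/
def Cfc (η α : ℝ) (B nf : ℕ) : ℝ :=
  η ^ 2 * α ^ 2 * (nf : ℝ)⁻¹ * ((B : ℝ)⁻¹ - (nf : ℝ)⁻¹)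

/-- Noise-accumulation matrices `N_k`. -/
def Nmat {d nr nf : ℕ} (η α : ℝ) (B : ℕ) (HR : Fin nr → Matrix (Fin d) (Fin d) ℝ)
    (HF : Fin nf → Matrix (Fin d) (Fin d) ℝ) : ℕ → Matrix (Fin d) (Fin d) ℝ
  | 0 => 1
  | k + 1 =>
      Cfc η α B nf • ∑ f, HF f * Nmat η α B HR HF k * HF f
        + Crc η α B nr • ∑ r, HR r * Nmat η α B HR HF k * HR r

/-- `W_k = J_{k−1} ⋯ J_1 J_0` for a finite sequence of batch selections. -/
def Wk {d nr nf : ℕ} (η α : ℝ) (B : ℕ) (HR : Fin nr → Matrix (Fin d) (Fin d) ℝ)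
    (HF : Fin nf → Matrix (Fin d) (Fin d) ℝ) {k : ℕ}
    (s : Fin k → (Fin nr → Bool) × (Fin nf → Bool)) : Matrix (Fin d) (Fin d) ℝ :=
  (List.ofFn fun i => Jop η α B HR HF (s i)).reverse.prod

/-- `E‖w_k‖² = E Tr(W_k W_kᵀ)`, the expectation taken over the i.i.d. Bernoulli
batch selections of the `k` steps. -/
def Ewk2 {d nr nf : ℕ} (η α : ℝ) (B : ℕ) (HR : Fin nr → Matrix (Fin d) (Fin d) ℝ)
    (HF : Fin nf → Matrix (Fin d) (Fin d) ℝ) (k : ℕ) : ℝ :=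
  ∑ s : Fin k → (Fin nr → Bool) × (Fin nf → Bool),
    (∏ i, selProb nr B (s i).1 * selProb nf B (s i).2) *
      (Wk η α B HR HF s * (Wk η α B HR HF s)ᵀ).trace

/-- `E[(e₁ᵀ w_k)²]`, i.e. the `(i0,i0)` entry of `E[W_k W_kᵀ]`. -/
def Ee1 {d nr nf : ℕ} (η α : ℝ) (B : ℕ) (HR : Fin nr → Matrix (Fin d) (Fin d) ℝ)
    (HF : Fin nf → Matrix (Fin d) (Fin d) ℝ) (i0 : Fin d) (k : ℕ) : ℝ :=
  ∑ s : Fin k → (Fin nr → Bool) × (Fin nf → Bool),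
    (∏ i, selProb nr B (s i).1 * selProb nf B (s i).2) *
      ((Wk η α B HR HF s * (Wk η α B HR HF s)ᵀ) i0 i0)

/-- Mixed Hessian `D_{rf} = C'_r H_r^R + C'_f H_f^F` for a retain/forget pair. -/
def Drf {d nr nf : ℕ} (Cr' Cf' : ℝ) (HR : Fin nr → Matrix (Fin d) (Fin d) ℝ)
    (HF : Fin nf → Matrix (Fin d) (Fin d) ℝ) (p : Fin nr × Fin nf) :
    Matrix (Fin d) (Fin d) ℝ :=
  Cr' • HR p.1 + Cf' • HF p.2

/-- Mix-Hessian `D = (1/(n_r n_f)) Σ_{r,f} D_{rf}`. -/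
def Dmix {d nr nf : ℕ} (Cr' Cf' : ℝ) (HR : Fin nr → Matrix (Fin d) (Fin d) ℝ)
    (HF : Fin nf → Matrix (Fin d) (Fin d) ℝ) : Matrix (Fin d) (Fin d) ℝ :=
  ((nr : ℝ) * nf)⁻¹ • ∑ p : Fin nr × Fin nf, Drf Cr' Cf' HR HF p

/-- Mix-coherence matrix `S_{(r,f),(r',f')} = ‖D_{rf}^{1/2} D_{r'f'}^{1/2}‖_F`. -/
def Smat {d nr nf : ℕ} (Cr' Cf' : ℝ) (HR : Fin nr → Matrix (Fin d) (Fin d) ℝ)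
    (HF : Fin nf → Matrix (Fin d) (Fin d) ℝ) :
    Matrix (Fin nr × Fin nf) (Fin nr × Fin nf) ℝ :=
  Matrix.of fun p q =>
    frob (psdSqrt (Drf Cr' Cf' HR HF p) * psdSqrt (Drf Cr' Cf' HR HF q))

/-- Unlearning coherence `σ = λ_max(S) / max_{(r,f)} λ_max(D_{rf})`. -/
def cohSigma {d nr nf : ℕ} (Cr' Cf' : ℝ) (HR : Fin nr → Matrix (Fin d) (Fin d) ℝ)
    (HF : Fin nf → Matrix (Fin d) (Fin d) ℝ) : ℝ :=
  lamMax (Smat Cr' Cf' HR HF) / ⨆ p : Fin nr × Fin nf, lamMax (Drf Cr' Cf' HR HF p)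

/-- Stacked filter-weight vector of the two-layer ReLU CNN signal-plus-noise model. -/
def wvec (d mfil : ℕ) (μ ξi : Fin d → ℝ) (yi : ℝ)
    (ai bi : Bool → Fin mfil → Bool) : (Bool × Fin mfil) × Fin d → ℝ :=
  fun p =>
    ((if p.1.1 then (1 : ℝ) else -1) / mfil) *
      ((if ai p.1.1 p.1.2 then (1 : ℝ) else 0) * μ p.2 +
        (if bi p.1.1 p.1.2 then (1 : ℝ) else 0) * yi * ξi p.2)

/-- Per-sample Hessian `H_i = ℓ''_i w_i w_iᵀ` of the signal-plus-noise model. -/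
def hessCNN (d mfil : ℕ) (μ ξi : Fin d → ℝ) (yi ℓi : ℝ)
    (ai bi : Bool → Fin mfil → Bool) :
    Matrix ((Bool × Fin mfil) × Fin d) ((Bool × Fin mfil) × Fin d) ℝ :=
  ℓi • vecMulVec (wvec d mfil μ ξi yi ai bi) (wvec d mfil μ ξi yi ai bi)

/-- Mixed Hessian `D_{rf} = C'_r H_r + C'_f H_{n_r+f}` in the CNN model, with the
retain set given by the first `n_r` samples and the forget set by the last `n_f`. -/
def DrfCNN (d mfil nr nf : ℕ) (μ : Fin d → ℝ) (ξ : Fin (nr + nf) → Fin d → ℝ)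
    (y ℓ : Fin (nr + nf) → ℝ) (a b : Fin (nr + nf) → Bool → Fin mfil → Bool)
    (Cr' Cf' : ℝ) (p : Fin nr × Fin nf) :
    Matrix ((Bool × Fin mfil) × Fin d) ((Bool × Fin mfil) × Fin d) ℝ :=
  Cr' • hessCNN d mfil μ (ξ (Fin.castAdd nf p.1)) (y (Fin.castAdd nf p.1))
        (ℓ (Fin.castAdd nf p.1)) (a (Fin.castAdd nf p.1)) (b (Fin.castAdd nf p.1))
    + Cf' • hessCNN d mfil μ (ξ (Fin.natAdd nr p.2)) (y (Fin.natAdd nr p.2))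
        (ℓ (Fin.natAdd nr p.2)) (a (Fin.natAdd nr p.2)) (b (Fin.natAdd nr p.2))

/-- Mix-coherence matrix of the CNN model. -/
def SmatCNN (d mfil nr nf : ℕ) (μ : Fin d → ℝ) (ξ : Fin (nr + nf) → Fin d → ℝ)
    (y ℓ : Fin (nr + nf) → ℝ) (a b : Fin (nr + nf) → Bool → Fin mfil → Bool)
    (Cr' Cf' : ℝ) : Matrix (Fin nr × Fin nf) (Fin nr × Fin nf) ℝ :=
  Matrix.of fun p q =>
    frob (psdSqrt (DrfCNN d mfil nr nf μ ξ y ℓ a b Cr' Cf' p) *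
      psdSqrt (DrfCNN d mfil nr nf μ ξ y ℓ a b Cr' Cf' q))

/-! Writing `A_i = T_i T_i` with `T_i = A_i^{1/2}`, the product regroups as
`T_1 (T_1 T_2) ⋯ (T_{k-1} T_k) T_k`; moving the last factor to the front by cyclicity of the trace,
the trace is `Tr((T_k T_1) · P)` with `P = Π (T_i T_{i+1})`. Cauchy–Schwarz for the Frobenius inner
product and submultiplicativity of the Frobenius norm finish the bound. -/

section Frobenius

attribute [local instance] Matrix.frobeniusNormedRing

variable {n : Type*} [Fintype n]

lemma frob_eq_norm [DecidableEq n] (M : Matrix n n ℝ) : frob M = ‖M‖ := by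
  simp only [frob, frobenius_norm_def, Real.norm_eq_abs, Real.sqrt_eq_rpow, one_div]
  norm_cast
  simp only [sq_abs]

lemma trace_mul_le_frob_mul_frob (M N : Matrix n n ℝ) : (M * N).trace ≤ frob M * frob N := by
  have hN : ∑ i, ∑ j, N j i ^ 2 = ∑ i, ∑ j, N i j ^ 2 := Finset.sum_comm
  simpa only [frob, trace, diag_apply, mul_apply, ← hN, ← Fintype.sum_prod_type'] using
    Real.sum_mul_le_sqrt_mul_sqrt univ (fun p : n × n => M p.1 p.2) (fun p => N p.2 p.1)

lemma frob_list_prod_le [DecidableEq n] {L : List (Matrix n n ℝ)} (hL : L ≠ []) :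
    frob L.prod ≤ (L.map frob).prod := by
  rw [show (frob : Matrix n n ℝ → ℝ) = norm from funext frob_eq_norm]
  exact List.norm_prod_le' hL

end Frobenius

lemma psdSqrt_mul_self {n : Type*} [Fintype n] [DecidableEq n] {A : Matrix n n ℝ}
    (hA : A.PosSemidef) : psdSqrt A * psdSqrt A = A := by
  set U : Matrix n n ℝ := (hA.1.eigenvectorUnitary : Matrix n n ℝ)
  set S := Matrix.diagonal (Real.sqrt ∘ hA.1.eigenvalues) with hS
  have hU : star U * U = 1 := Unitary.coe_star_mul_self _
  have hSS : S * S = Matrix.diagonal (RCLike.ofReal ∘ hA.1.eigenvalues) := by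
    rw [hS, diagonal_mul_diagonal]
    congr 1
    funext i
    simp [Real.mul_self_sqrt (hA.eigenvalues_nonneg i)]
  calc psdSqrt A * psdSqrt A = U * (S * (star U * U) * S) * star U := by
        simp only [psdSqrt, dif_pos hA, U, S, Matrix.mul_assoc]
    _ = A := by
        rw [hU, Matrix.mul_one, hSS]
        exact hA.1.spectral_theorem.symm

lemma List.prod_ofFn_mul_self_eq {M : Type*} [Monoid M] (T : ℕ → M) (n : ℕ) :
    (List.ofFn fun i : Fin (n + 1) => T i * T i).prod =
      T 0 * (List.ofFn fun i : Fin n => T i * T (i + 1)).prod * T n := by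
  induction n with
  | zero => simp
  | succ n ih =>
    rw [List.ofFn_succ', List.prod_concat]
    simp only [Fin.val_castSucc, Fin.val_last, ih]
    rw [List.ofFn_succ', List.prod_concat]
    simp only [Fin.val_castSucc, Fin.val_last, mul_assoc]

/-- chain trace inequality.  For PSD matrices `A_1, …, A_k` (`k ≥ 2`),
`Tr(A_1 ⋯ A_k) ≤ ‖A_k^{1/2} A_1^{1/2}‖_F · Π_{i=1}^{k−1} ‖A_i^{1/2} A_{i+1}^{1/2}‖_F`. -/
theorem stmt12 (d k : ℕ) (hk : 2 ≤ k)
    (A : Fin k → Matrix (Fin d) (Fin d) ℝ) (hA : ∀ i, (A i).PosSemidef) :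
    ((List.ofFn A).prod).trace ≤
      frob (psdSqrt (A ⟨k - 1, by omega⟩) * psdSqrt (A ⟨0, by omega⟩)) *
        ∏ i : Fin (k - 1),
          frob (psdSqrt (A ⟨(i : ℕ), by have := i.isLt; omega⟩) *
            psdSqrt (A ⟨(i : ℕ) + 1, by have := i.isLt; omega⟩)) := by
  set T : ℕ → Matrix (Fin d) (Fin d) ℝ := fun i => if h : i < k then psdSqrt (A ⟨i, h⟩) else 1
  have hT (i : ℕ) (h : i < k) : T i = psdSqrt (A ⟨i, h⟩) := dif_pos h
  have hsplit : List.ofFn A = List.ofFn fun i : Fin (k - 1 + 1) => T i * T i := by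
    rw [Nat.sub_add_cancel (by omega : 1 ≤ k)]
    congr with i : 1
    rw [hT i i.isLt, psdSqrt_mul_self (hA i)]
  have hne : (List.ofFn fun i : Fin (k - 1) => T i * T (i + 1)) ≠ [] := by
    simp only [ne_eq, List.ofFn_eq_nil_iff]
    omega
  rw [hsplit, List.prod_ofFn_mul_self_eq, trace_mul_cycle]
  refine (trace_mul_le_frob_mul_frob _ _).trans ?_
  rw [hT (k - 1) (by omega), hT 0 (by omega)]
  refine mul_le_mul_of_nonneg_left ((frob_list_prod_le hne).trans_eq ?_) (Real.sqrt_nonneg _)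
  rw [List.map_ofFn, List.prod_ofFn]
  refine Finset.prod_congr rfl fun i _ => ?_
  rw [Function.comp_apply, hT i (by omega), hT (i + 1) (by omega)]
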